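/- Let N ≥ 1, R > 0, k_c, k_m > 0 and angles φ₁, φ₂. Then the quantity G = (1/N)·|∑_{n=0}^{N−1} exp(−i·R·(k_m·cos(φ₂ − 2πn/N) − k_c·cos(φ₁ − 2πn/N)))| satisfies G = |∑_{s₁,s₂ ∈ ℤ} i^{s₁+s₂} J_{s₁}(R k_c) J_{s₂}(−R k_m) e^{i(s₁φ₁ + s₂φ₂)} · [N divides s₁+s₂]|, where [·] is 1 if the condition holds and 0 otherwise. -/

import Mathlib

open Complex Finset

/-- Bessel function of the first kind of integer order, via the integral representation. -/
noncomputable def besselJ (n : ℤ) (x : ℝ) : ℝ :=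
  (1 / Real.pi) * ∫ t in (0:ℝ)..Real.pi, Real.cos (n * t - x * Real.sin t)

/-!
Each phase factor `exp (I * x * cos u)` has the Jacobi–Anger expansion
`∑ s, I ^ s * J_s(x) * exp (I * s * u)`: evaluated at `u + π / 2`, this is the Fourier series of
the smooth `2π`-periodic function `θ ↦ exp (I * x * sin θ)`, whose Fourier coefficients are the
Bessel integrals and, after two integrations by parts, are `O(1 / s ^ 2)`; so the series converges
absolutely and pointwise. Multiplying the expansions of the two phase factors gives an absolutely
convergent double series for each array element, in which the element index `n` only enters
through `exp (-2π I (s₁ + s₂) n / N)`; its sum over the `N` elements is `N` if `N ∣ s₁ + s₂` and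
`0` otherwise.
-/

open Function Real intervalIntegral

theorem Function.Periodic.of_hasDerivAt {E : Type*} [NormedAddCommGroup E] [NormedSpace ℝ E]
    {f f' : ℝ → E} {c : ℝ} (hf : Periodic f c) (hf' : ∀ x, HasDerivAt f (f' x) x) :
    Periodic f' c := fun x => by
  have h := (hf' (x + c)).comp_add_const x c
  rw [show (fun y => f (y + c)) = f from funext hf] at h
  exact h.unique (hf' x)

theorem intervalIntegral.integral_neg_self_eq_integral_add_comp_neg {E : Type*}
    [NormedAddCommGroup E] [NormedSpace ℝ E] {g : ℝ → E} (hg : Continuous g) (a : ℝ) :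
    ∫ x in -a..a, g x = ∫ x in 0..a, (g x + g (-x)) := by
  rw [integral_add (hg.intervalIntegrable 0 a)
      ((by fun_prop : Continuous fun x => g (-x)).intervalIntegrable 0 a),
    integral_comp_neg, neg_zero, add_comm, integral_add_adjacent_intervals
      (hg.intervalIntegrable _ _) (hg.intervalIntegrable _ _)]

section FourierSeries

variable {T : ℝ} [hT : Fact (0 < T)]

theorem norm_fourierCoeff_le {E : Type*} [NormedAddCommGroup E] [NormedSpace ℂ E]
    {F : AddCircle T → E} {M : ℝ} (hF : ∀ x, ‖F x‖ ≤ M) (n : ℤ) :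
    ‖fourierCoeff F n‖ ≤ M := by
  have h := MeasureTheory.norm_integral_le_of_norm_le_const (μ := AddCircle.haarAddCircle)
    (f := fun t => fourier (-n) t • F t) (C := M)
    (.of_forall fun t => by rw [norm_smul, fourier_apply, Circle.norm_coe, one_mul]; exact hF t)
  rwa [MeasureTheory.probReal_univ, mul_one] at h

variable {f f' f'' : ℝ → ℂ}

theorem fourierCoeff_lift_of_hasDerivAt (hf : Periodic f T) (hf' : ∀ x, HasDerivAt f (f' x) x)
    (hcont : Continuous f') (n : ℤ) :
    fourierCoeff (hf.of_hasDerivAt hf').lift n = 2 * π * I * n / T * fourierCoeff hf.lift n := by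
  have hu : Continuous fun x : ℝ => fourier (-n) (x : AddCircle T) :=
    (map_continuous _).comp (AddCircle.continuous_mk' T)
  have ibp := integral_mul_deriv_eq_deriv_mul (fun x _ => hasDerivAt_fourier_neg T n x)
    (fun x _ => hf' x) ((hu.const_mul _).intervalIntegrable 0 T) (hcont.intervalIntegrable 0 T)
  have hT0 : ((T : ℝ) : AddCircle T) = ((0 : ℝ) : AddCircle T) := by simp
  rw [hT0, show f T = f 0 by simpa using hf 0, sub_self, zero_sub] at ibp
  simp only [fourierCoeff_eq_intervalIntegral _ n 0, zero_add, Periodic.lift_coe, smul_eq_mul,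
    Complex.real_smul, ibp, mul_assoc, integral_const_mul]
  ring

theorem summable_norm_fourierCoeff_lift (hf : Periodic f T) (hf' : ∀ x, HasDerivAt f (f' x) x)
    (hf'' : ∀ x, HasDerivAt f' (f'' x) x) (hcont : Continuous f'') :
    Summable fun n => ‖fourierCoeff hf.lift n‖ := by
  have hp' := hf.of_hasDerivAt hf'
  have hp'' := hp'.of_hasDerivAt hf''
  let G : C(AddCircle T, ℂ) := ⟨hp''.lift, continuous_coinduced_dom.mpr hcont⟩
  obtain ⟨M, hM⟩ : ∃ M, ∀ x, ‖hp''.lift x‖ ≤ M := ⟨‖G‖, G.norm_coe_le_norm⟩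
  have hcoeff (n : ℤ) : fourierCoeff hp''.lift n =
      (2 * π * I * n / T) ^ 2 * fourierCoeff hf.lift n := by
    rw [fourierCoeff_lift_of_hasDerivAt hp' hf'' hcont, fourierCoeff_lift_of_hasDerivAt hf hf'
      (continuous_iff_continuousAt.mpr fun x => (hf'' x).continuousAt)]
    ring
  refine ((summable_one_div_int_pow.mpr one_lt_two).mul_left ((T / (2 * π)) ^ 2 * M))
    |>.of_norm_bounded_eventually ?_
  filter_upwards [(Set.finite_singleton (0 : ℤ)).compl_mem_cofinite] with n hn
  have hn : (n : ℝ) ≠ 0 := by simpa using hn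
  have h := norm_fourierCoeff_le hM n
  have hnorm : ‖(2 * π * I * n / T : ℂ) ^ 2‖ = (2 * π * n / T) ^ 2 := by
    simp [div_pow, mul_pow, abs_of_pos hT.out]
  have hpos : 0 < (2 * π * n / T) ^ 2 :=
    pow_two_pos_of_ne_zero (div_ne_zero (mul_ne_zero (by positivity) hn) hT.out.ne')
  rw [hcoeff, norm_mul, hnorm, ← le_div_iff₀' hpos] at h
  rw [norm_norm]
  refine h.trans (le_of_eq ?_)
  field_simp

theorem hasSum_fourierCoeff_lift_mul_fourier (hf : Periodic f T)
    (hf' : ∀ x, HasDerivAt f (f' x) x) (hf'' : ∀ x, HasDerivAt f' (f'' x) x)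
    (hcont : Continuous f'') (x : ℝ) :
    HasSum (fun n => fourierCoeff hf.lift n * fourier n (x : AddCircle T)) (f x) := by
  let F : C(AddCircle T, ℂ) := ⟨hf.lift, continuous_coinduced_dom.mpr
    (continuous_iff_continuousAt.mpr fun x => (hf' x).continuousAt)⟩
  simpa [F] using has_pointwise_sum_fourier_series_of_summable (f := F)
    (summable_norm_fourierCoeff_lift hf hf' hf'' hcont).of_norm x

end FourierSeries

section JacobiAnger

instance instFactZeroLtTwoPi : Fact (0 < 2 * π) := ⟨two_pi_pos⟩

theorem periodic_exp_I_mul_sin (x : ℝ) :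
    Periodic (fun θ : ℝ => exp (I * x * Real.sin θ)) (2 * π) :=
  fun θ => by simp only [Real.sin_add_two_pi]

theorem hasDerivAt_exp_I_mul_sin (x θ : ℝ) :
    HasDerivAt (fun θ : ℝ => exp (I * x * Real.sin θ))
      (I * x * Real.cos θ * exp (I * x * Real.sin θ)) θ := by
  refine (((Real.hasDerivAt_sin θ).ofReal_comp).const_mul (I * x)).cexp.congr_deriv ?_
  ring

theorem hasDerivAt_I_mul_cos_mul_exp_I_mul_sin (x θ : ℝ) :
    HasDerivAt (fun θ : ℝ => I * x * Real.cos θ * exp (I * x * Real.sin θ))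
      ((-(I * x * Real.sin θ) + (I * x * Real.cos θ) ^ 2) * exp (I * x * Real.sin θ)) θ := by
  refine ((((Real.hasDerivAt_cos θ).ofReal_comp).const_mul (I * x)).mul
    (hasDerivAt_exp_I_mul_sin x θ)).congr_deriv ?_
  push_cast
  ring

theorem fourierCoeff_lift_exp_I_mul_sin (x : ℝ) (n : ℤ) :
    fourierCoeff (periodic_exp_I_mul_sin x).lift n = besselJ n x := by
  -- The integrand is `exp (-ψ θ * I)` with `ψ θ = n θ - x sin θ` odd, so pairing `θ` with `-θ`
  -- turns it into `2 cos ψ θ`.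
  have hψ (θ : ℝ) :
      fourier (-n) (θ : AddCircle (2 * π)) • (periodic_exp_I_mul_sin x).lift θ =
        exp (-(((n * θ - x * Real.sin θ : ℝ) : ℂ) * I)) := by
    rw [fourier_coe_apply, Periodic.lift_coe, smul_eq_mul, ← Complex.exp_add]
    congr 1
    push_cast
    field_simp
    ring
  have hsym (θ : ℝ) : exp (-(((n * θ - x * Real.sin θ : ℝ) : ℂ) * I)) +
      exp (-(((n * -θ - x * Real.sin (-θ) : ℝ) : ℂ) * I)) =
        2 * Real.cos (n * θ - x * Real.sin θ) := by
    rw [Complex.ofReal_cos, two_cos, Real.sin_neg, add_comm]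
    congr 2 <;> push_cast <;> ring
  rw [fourierCoeff_eq_intervalIntegral _ n (-π), show -π + 2 * π = π by ring]
  simp only [hψ]
  rw [integral_neg_self_eq_integral_add_comp_neg (by fun_prop)]
  simp only [hsym, integral_const_mul, intervalIntegral.integral_ofReal, besselJ,
    Complex.real_smul]
  push_cast
  field_simp

theorem summable_abs_besselJ (x : ℝ) : Summable fun n : ℤ => |besselJ n x| := by
  simpa [fourierCoeff_lift_exp_I_mul_sin] using summable_norm_fourierCoeff_lift
    (periodic_exp_I_mul_sin x) (hasDerivAt_exp_I_mul_sin x)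
    (hasDerivAt_I_mul_cos_mul_exp_I_mul_sin x) (by fun_prop)

theorem hasSum_besselJ_mul_exp (x θ : ℝ) :
    HasSum (fun n : ℤ => besselJ n x * exp (I * n * θ)) (exp (I * x * Real.sin θ)) := by
  have h := hasSum_fourierCoeff_lift_mul_fourier (periodic_exp_I_mul_sin x)
    (hasDerivAt_exp_I_mul_sin x) (hasDerivAt_I_mul_cos_mul_exp_I_mul_sin x) (by fun_prop) θ
  convert h using 2 with n
  rw [fourierCoeff_lift_exp_I_mul_sin, fourier_coe_apply]
  congr 2
  push_cast
  field_simp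

theorem hasSum_I_zpow_mul_besselJ_mul_exp (x u : ℝ) :
    HasSum (fun n : ℤ => I ^ n * besselJ n x * exp (I * n * u)) (exp (I * x * Real.cos u)) := by
  have h := hasSum_besselJ_mul_exp x (u + π / 2)
  rw [Real.sin_add_pi_div_two] at h
  convert h using 2 with n
  rw [show I * n * ((u + π / 2 : ℝ) : ℂ) = I * n * u + n * (π / 2 * I) by push_cast; ring,
    Complex.exp_add, Complex.exp_int_mul, Complex.exp_pi_div_two_mul_I]
  ring

theorem norm_I_zpow_mul_besselJ_mul_exp (x u : ℝ) (n : ℤ) :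
    ‖I ^ n * besselJ n x * exp (I * n * u)‖ = |besselJ n x| := by
  simp [Complex.norm_exp]

theorem hasSum_exp_I_mul_cos_mul_exp_I_mul_cos (a b u v : ℝ) :
    HasSum (fun p : ℤ × ℤ => I ^ (p.1 + p.2) * besselJ p.1 a * besselJ p.2 b *
        exp (I * (p.1 * u + p.2 * v)))
      (exp (I * a * Real.cos u) * exp (I * b * Real.cos v)) := by
  have hnorm (x w : ℝ) : Summable fun n : ℤ => ‖I ^ n * besselJ n x * exp (I * n * w)‖ := by
    simpa only [norm_I_zpow_mul_besselJ_mul_exp] using summable_abs_besselJ x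
  have hs := summable_mul_of_summable_norm (hnorm a u) (hnorm b v)
  refine ((hasSum_I_zpow_mul_besselJ_mul_exp a u).mul
    (hasSum_I_zpow_mul_besselJ_mul_exp b v) hs).congr_fun fun p => ?_
  rw [zpow_add₀ I_ne_zero, mul_add, Complex.exp_add]
  ring_nf

end JacobiAnger

theorem IsPrimitiveRoot.geom_sum_zpow {K : Type*} [Field K] {ζ : K} {N : ℕ}
    (hζ : IsPrimitiveRoot ζ N) (s : ℤ) :
    ∑ n ∈ range N, (ζ ^ s) ^ n = if (N : ℤ) ∣ s then (N : K) else 0 := by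
  have h : (ζ ^ s) ^ N = 1 := by
    rw [← zpow_natCast, ← zpow_mul, mul_comm, zpow_mul, zpow_natCast, hζ.pow_eq_one, one_zpow]
  split_ifs with hs
  · simp [(hζ.zpow_eq_one_iff_dvd s).mpr hs]
  · rw [geom_sum_eq (mt (hζ.zpow_eq_one_iff_dvd s).mp hs), h, sub_self, zero_div]

theorem sum_range_exp_neg_two_pi_I_mul (N : ℕ) (hN : N ≠ 0) (s : ℤ) :
    ∑ n ∈ range N, exp (-(I * s * (2 * π * n / N : ℝ))) =
      if (N : ℤ) ∣ s then (N : ℂ) else 0 := by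
  have h := (Complex.isPrimitiveRoot_exp N hN).geom_sum_zpow (-s)
  simp only [dvd_neg] at h
  rw [← h]
  refine sum_congr rfl fun n _ => ?_
  rw [← zpow_natCast, ← zpow_mul, ← Complex.exp_int_mul]
  congr 1
  push_cast
  ring

theorem hasSum_sum_range_exp_I_mul_cos_mul_exp_I_mul_cos (N : ℕ) (hN : N ≠ 0)
    (a b φ₁ φ₂ : ℝ) :
    HasSum (fun p : ℤ × ℤ => N * ((if (N : ℤ) ∣ (p.1 + p.2) then (1 : ℂ) else 0) *
        I ^ (p.1 + p.2) * besselJ p.1 a * besselJ p.2 b * exp (I * (p.1 * φ₁ + p.2 * φ₂))))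
      (∑ n ∈ range N, exp (I * a * Real.cos (φ₁ - 2 * π * n / N)) *
        exp (I * b * Real.cos (φ₂ - 2 * π * n / N))) := by
  refine (hasSum_sum fun n _ => hasSum_exp_I_mul_cos_mul_exp_I_mul_cos a b _ _).congr_fun
    fun p => ?_
  have hshift (n : ℕ) : exp (I * (p.1 * ((φ₁ - 2 * π * n / N : ℝ) : ℂ) +
      p.2 * ((φ₂ - 2 * π * n / N : ℝ) : ℂ))) = exp (I * (p.1 * φ₁ + p.2 * φ₂)) *
        exp (-(I * (p.1 + p.2 : ℤ) * (2 * π * n / N : ℝ))) := by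
    rw [← Complex.exp_add]
    congr 1
    push_cast
    ring
  simp only [hshift, ← mul_assoc]
  rw [← mul_sum, sum_range_exp_neg_two_pi_I_mul N hN]
  split_ifs <;> ring

theorem uca_angular_gain_bessel_series_general (N : ℕ) (hN : 1 ≤ N) (R kc km φ₁ φ₂ : ℝ) :
    (1 / N : ℝ) * ‖∑ n ∈ Finset.range N,
        Complex.exp (-Complex.I * R *
          (km * Real.cos (φ₂ - 2 * Real.pi * n / N) -
           kc * Real.cos (φ₁ - 2 * Real.pi * n / N)))‖ =
    ‖∑' p : ℤ × ℤ,
        (if (N : ℤ) ∣ (p.1 + p.2) then (1 : ℂ) else 0) *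
          Complex.I ^ (p.1 + p.2) * (besselJ p.1 (R * kc) : ℂ) *
          (besselJ p.2 (-(R * km)) : ℂ) *
          Complex.exp (Complex.I * (p.1 * φ₁ + p.2 * φ₂))‖ := by
  have hN0 : (N : ℂ) ≠ 0 := Nat.cast_ne_zero.mpr (by omega)
  have hphase (n : ℕ) : exp (-I * R * (km * Real.cos (φ₂ - 2 * π * n / N) -
      kc * Real.cos (φ₁ - 2 * π * n / N))) =
        exp (I * (R * kc : ℝ) * Real.cos (φ₁ - 2 * π * n / N)) *
          exp (I * (-(R * km) : ℝ) * Real.cos (φ₂ - 2 * π * n / N)) := by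
    rw [← Complex.exp_add]
    congr 1
    push_cast
    ring
  have hsum := (hasSum_sum_range_exp_I_mul_cos_mul_exp_I_mul_cos N (by omega) (R * kc)
    (-(R * km)) φ₁ φ₂).div_const N
  simp only [mul_div_cancel_left₀ _ hN0] at hsum
  rw [hsum.tsum_eq, sum_congr rfl fun n _ => hphase n, norm_div, Complex.norm_natCast,
    one_div_mul_eq_div]

theorem uca_angular_gain_bessel_series (N : ℕ) (hN : 1 ≤ N) (R kc km φ₁ φ₂ : ℝ)
    (hR : 0 < R) (hkc : 0 < kc) (hkm : 0 < km) :
    (1 / N : ℝ) * ‖∑ n ∈ Finset.range N,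
        Complex.exp (-Complex.I * R *
          (km * Real.cos (φ₂ - 2 * Real.pi * n / N) -
           kc * Real.cos (φ₁ - 2 * Real.pi * n / N)))‖ =
    ‖∑' p : ℤ × ℤ,
        (if (N : ℤ) ∣ (p.1 + p.2) then (1 : ℂ) else 0) *
          Complex.I ^ (p.1 + p.2) * (besselJ p.1 (R * kc) : ℂ) *
          (besselJ p.2 (-(R * km)) : ℂ) *
          Complex.exp (Complex.I * (p.1 * φ₁ + p.2 * φ₂))‖ :=
  uca_angular_gain_bessel_series_general N hN R kc km φ₁ φ₂
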